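/- arXiv:2312.06895 — 5 statements merged into one kernel-verified Lean document; each statement's English description precedes it below -/
import Mathlib

section
/- For every integer t ≥ 2, the minimum number of edges in a graph that is K_t-Ramsey equals binomial(r(K_t), 2), where r(K_t) is the Ramsey number of K_t. Equivalently, r_{K_2}(K_t) = binomial(r(K_t), 2). -/
/-- A graph `G` is `K_t`-Ramsey: every 2-coloring of the edges (formalized as a coloring of
all pairs) contains a monochromatic copy of `K_t`, i.e. a set `S` of `t` vertices, pairwise
adjacent, all of whose edges receive the same color. -/
def IsRamsey {V : Type*} (t : ℕ) (G : SimpleGraph V) : Prop :=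
  ∀ c : Sym2 V → Bool, ∃ (S : Finset V) (b : Bool), S.card = t ∧
    ∀ u ∈ S, ∀ v ∈ S, u ≠ v → G.Adj u v ∧ c s(u, v) = b

/-- The Ramsey number `r(K_t)`: the least `n` such that the complete graph on `n` vertices
is `K_t`-Ramsey. -/
noncomputable def ramseyNumber (t : ℕ) : ℕ :=
  sInf {n : ℕ | IsRamsey t (⊤ : SimpleGraph (Fin n))}

/-- The number of edges of a graph. -/
noncomputable def edgeCount {V : Type*} (G : SimpleGraph V) : ℕ :=
  Nat.card G.edgeSet

/-!
Chvátal's argument. A colouring of `G` with `k = χ(G)` colours is a homomorphism `G → K_k`, and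
the Ramsey property passes along homomorphisms (a monochromatic clique maps injectively), so `K_k`
is `K_t`-Ramsey and `k ≥ r(K_t)`. In an optimal colouring every two colour classes are joined by
an edge, so `G` has at least `k.choose 2 ≥ r(K_t).choose 2` edges; `K_{r(K_t)}` attains this.
That `r(K_t)` exists at all is the Erdős–Szekeres bound.
-/

open Finset SimpleGraph

section Monochromatic

variable {V : Type*} (c : Sym2 V → Bool)

def IsMonochromatic (b : Bool) (S : Finset V) : Prop :=
  ∀ u ∈ S, ∀ v ∈ S, u ≠ v → c s(u, v) = b

variable {c} [DecidableEq V]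

lemma IsMonochromatic.insert_of_subset_filter {A S : Finset V} {v : V} {b : Bool}
    (hv : v ∈ A) (hSA : S ⊆ (A.erase v).filter fun u ↦ c s(v, u) = b)
    (hS : IsMonochromatic c b S) :
    insert v S ⊆ A ∧ #(insert v S) = #S + 1 ∧ IsMonochromatic c b (insert v S) := by
  have hSv : ∀ u ∈ S, u ≠ v ∧ u ∈ A ∧ c s(v, u) = b := fun u hu ↦ by
    simpa [and_assoc] using hSA hu
  refine ⟨insert_subset hv fun u hu ↦ (hSv u hu).2.1,
    card_insert_of_notMem fun h ↦ (hSv v h).1 rfl, ?_⟩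
  intro x hx y hy hxy
  simp only [mem_insert] at hx hy
  rcases hx with rfl | hx <;> rcases hy with rfl | hy
  · exact absurd rfl hxy
  · exact (hSv y hy).2.2
  · rw [Sym2.eq_swap]; exact (hSv x hx).2.2
  · exact hS x hx y hy hxy

-- Erdős–Szekeres, with the bound `(s + t).choose s` in place of the sharp
-- `(s + t - 2).choose (s - 1)`, which would need truncated subtraction.
theorem exists_isMonochromatic_of_choose_le (s t : ℕ) (A : Finset V)
    (hA : (s + t).choose s ≤ #A) :
    ∃ S ⊆ A,
      (#S = s ∧ IsMonochromatic c false S) ∨ (#S = t ∧ IsMonochromatic c true S) := by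
  induction s generalizing t A with
  | zero => exact ⟨∅, empty_subset A, .inl ⟨rfl, by simp [IsMonochromatic]⟩⟩
  | succ s ihs =>
    induction t generalizing A with
    | zero => exact ⟨∅, empty_subset A, .inr ⟨rfl, by simp [IsMonochromatic]⟩⟩
    | succ t iht =>
      have hsplit : (s + 1 + (t + 1)).choose (s + 1)
          = (s + (t + 1)).choose s + (s + 1 + t).choose (s + 1) := by
        rw [show s + 1 + (t + 1) = s + (t + 1) + 1 by ring, Nat.choose_succ_succ,
          show s + (t + 1) = s + 1 + t by ring]
      have hpos₁ := Nat.choose_pos (Nat.le_add_right s (t + 1))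
      have hpos₂ := Nat.choose_pos (Nat.le_add_right (s + 1) t)
      obtain ⟨v, hv⟩ : A.Nonempty := card_pos.mp (by omega)
      set B : Bool → Finset V := fun b ↦ (A.erase v).filter fun u ↦ c s(v, u) = b
      have hB : #(B false) + #(B true) = #A - 1 := by
        have := card_filter_add_card_filter_not (s := A.erase v) fun u ↦ c s(v, u) = false
        simpa only [Bool.not_eq_false, card_erase_of_mem hv] using this
      by_cases hfalse : (s + (t + 1)).choose s ≤ #(B false)
      · obtain ⟨S, hSB, hS | hS⟩ := ihs (t + 1) (B false) hfalse
        · obtain ⟨hSA, hcard, hmono⟩ := hS.2.insert_of_subset_filter hv hSB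
          exact ⟨insert v S, hSA, .inl ⟨by rw [hcard, hS.1], hmono⟩⟩
        · exact ⟨S, hSB.trans ((filter_subset _ _).trans (erase_subset _ _)), .inr hS⟩
      · obtain ⟨S, hSB, hS | hS⟩ := iht (B true) (by omega)
        · exact ⟨S, hSB.trans ((filter_subset _ _).trans (erase_subset _ _)), .inl hS⟩
        · obtain ⟨hSA, hcard, hmono⟩ := hS.2.insert_of_subset_filter hv hSB
          exact ⟨insert v S, hSA, .inr ⟨by rw [hcard, hS.1], hmono⟩⟩

end Monochromatic

theorem isRamsey_top_of_choose_le {V : Type*} [Fintype V] {t : ℕ}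
    (h : (t + t).choose t ≤ Fintype.card V) : IsRamsey t (⊤ : SimpleGraph V) := by
  classical
  intro c
  obtain ⟨S, -, hS | hS⟩ := exists_isMonochromatic_of_choose_le (c := c) t t univ h <;>
    exact ⟨S, _, hS.1, fun u hu v hv huv ↦ ⟨huv, hS.2 u hu v hv huv⟩⟩

lemma isRamsey_top_ramseyNumber (t : ℕ) :
    IsRamsey t (⊤ : SimpleGraph (Fin (ramseyNumber t))) :=
  Nat.sInf_mem (s := {n | IsRamsey t (⊤ : SimpleGraph (Fin n))})
    ⟨_, isRamsey_top_of_choose_le (Fintype.card_fin ((t + t).choose t)).ge⟩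

section Hom

variable {V W : Type*} {G : SimpleGraph V} {H : SimpleGraph W} {t : ℕ}

theorem IsRamsey.map (f : G →g H) (hG : IsRamsey t G) : IsRamsey t H := by
  classical
  intro c
  obtain ⟨S, b, hcard, hS⟩ := hG (c ∘ Sym2.map f)
  have hinj : Set.InjOn f S := fun u hu v hv hf ↦ by
    by_contra huv
    exact (f.map_adj (hS u hu v hv huv).1).ne hf
  refine ⟨S.image f, b, by rw [card_image_of_injOn hinj, hcard], ?_⟩
  simp only [mem_image]
  rintro _ ⟨u, hu, rfl⟩ _ ⟨v, hv, rfl⟩ huv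
  have huv' : u ≠ v := fun h ↦ huv (h ▸ rfl)
  exact ⟨f.map_adj (hS u hu v hv huv').1, (hS u hu v hv huv').2⟩

theorem IsRamsey.ramseyNumber_le_chromaticNumber (hG : IsRamsey t G) :
    (ramseyNumber t : ℕ∞) ≤ G.chromaticNumber :=
  le_chromaticNumber_iff_coloring.mpr fun _ C ↦ Nat.cast_le.mpr (Nat.sInf_le (hG.map C))

end Hom

lemma edgeCount_top_fin (n : ℕ) : edgeCount (⊤ : SimpleGraph (Fin n)) = n.choose 2 := by
  rw [edgeCount, Nat.card_eq_fintype_card, ← SimpleGraph.edgeFinset_card,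
    SimpleGraph.card_edgeFinset_top_eq_card_choose_two, Fintype.card_fin]

namespace SimpleGraph

variable {V α : Type*} {G : SimpleGraph V} [Fintype α]

/-- Two colour classes of an optimal colouring cannot be independent of each other: otherwise
recolouring one into the other would leave a colour unused. -/
theorem Coloring.exists_adj_of_card_le_chromaticNumber (C : G.Coloring α)
    (hC : Fintype.card α ≤ G.chromaticNumber) {i j : α} (hij : i ≠ j) :
    ∃ u v, G.Adj u v ∧ C u = i ∧ C v = j := by
  classical
  by_contra! h
  let D : G.Coloring α := Coloring.mk (fun v ↦ if C v = j then i else C v) fun {u v} huv ↦ by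
    split_ifs <;> grind [C.valid huv, h u v huv, h v u huv.symm]
  obtain ⟨v, hv⟩ := card_le_chromaticNumber_iff_forall_surjective.mp hC D j
  have hv : (if C v = j then i else C v) = j := hv
  split_ifs at hv <;> grind

theorem Coloring.surjective_mapEdgeSet (C : G.Coloring α)
    (hC : Fintype.card α ≤ G.chromaticNumber) : Function.Surjective C.mapEdgeSet := by
  rintro ⟨e, he⟩
  induction e using Sym2.ind with
  | h i j =>
    obtain ⟨u, v, huv, rfl, rfl⟩ :=
      C.exists_adj_of_card_le_chromaticNumber hC ((top_adj i j).mp he)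
    exact ⟨⟨s(u, v), huv⟩, rfl⟩

theorem choose_two_le_edgeCount_of_le_chromaticNumber [Finite V] {k : ℕ}
    (hk : (k : ℕ∞) ≤ G.chromaticNumber) : k.choose 2 ≤ edgeCount G := by
  set m := G.chromaticNumber.toNat
  obtain ⟨C⟩ := G.colorable_chromaticNumber_of_fintype
  have hsurj := C.surjective_mapEdgeSet (by simpa using ENat.natCast_toNat_le_self _)
  calc k.choose 2 ≤ m.choose 2 :=
        Nat.choose_le_choose 2 (le_chromaticNumber_iff_colorable.mp hk m ⟨C⟩)
    _ = edgeCount (⊤ : SimpleGraph (Fin m)) := (edgeCount_top_fin m).symm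
    _ ≤ edgeCount G := Nat.card_le_card_of_surjective _ hsurj

end SimpleGraph

theorem IsRamsey.choose_two_ramseyNumber_le_edgeCount {V : Type*} [Finite V]
    {G : SimpleGraph V} {t : ℕ} (hG : IsRamsey t G) :
    (ramseyNumber t).choose 2 ≤ edgeCount G :=
  choose_two_le_edgeCount_of_le_chromaticNumber hG.ramseyNumber_le_chromaticNumber

theorem sizeRamsey_clique_general (t : ℕ) :
    sInf {m : ℕ | ∃ (n : ℕ) (G : SimpleGraph (Fin n)), IsRamsey t G ∧ edgeCount G = m}
      = (ramseyNumber t).choose 2 := by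
  have hmem : (ramseyNumber t).choose 2 ∈
      {m : ℕ | ∃ (n : ℕ) (G : SimpleGraph (Fin n)), IsRamsey t G ∧ edgeCount G = m} :=
    ⟨_, ⊤, isRamsey_top_ramseyNumber t, edgeCount_top_fin _⟩
  refine le_antisymm (Nat.sInf_le hmem) (le_csInf ⟨_, hmem⟩ ?_)
  rintro _ ⟨n, G, hG, rfl⟩
  exact hG.choose_two_ramseyNumber_le_edgeCount

/-- Chvátal: the minimum number of edges of a `K_t`-Ramsey graph is `(r(K_t)).choose 2`,
i.e. `r_{K_2}(K_t) = binomial(r(K_t), 2)`. -/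
theorem sizeRamsey_clique (t : ℕ) (ht : 2 ≤ t) :
    sInf {m : ℕ | ∃ (n : ℕ) (G : SimpleGraph (Fin n)), IsRamsey t G ∧ edgeCount G = m}
      = (ramseyNumber t).choose 2 :=
  sizeRamsey_clique_general t
end

section
/- Let t ≥ 3 and let G be a K_t-Ramsey critical graph. Then every edge f of G is the intersection of two copies of K_t in G: there exist two t-vertex cliques Q_1 and Q_2 of G, both containing the two endpoints of f, such that the vertex sets of Q_1 and Q_2 intersect exactly in the two endpoints of f. -/
/-- `G` is `K_t`-Ramsey critical: `G` is `K_t`-Ramsey but no proper subgraph of `G` is. -/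
def IsRamseyCritical {V : Type*} (t : ℕ) (G : SimpleGraph V) : Prop :=
  IsRamsey t G ∧ ∀ G' : SimpleGraph V, G' < G → ¬ IsRamsey t G'

/-!
Delete an edge `uv` of the critical graph `G`. The smaller graph is not Ramsey, so some colouring
`c` of it has no monochromatic `K_t`. Extending `c` to `uv` by either colour `b` gives a colouring
of `G`, which has a monochromatic `K_t`; that clique must use the edge `uv` (otherwise it would
already be monochromatic under `c`), so it has colour `b`. Call these cliques `Q_true`, `Q_false`.
A third common vertex `w` would make `uw` both colours under `c`.
-/

namespace SimpleGraph

variable {V : Type*} {G : SimpleGraph V}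

def IsMonoClique (G : SimpleGraph V) (c : Sym2 V → Bool) (b : Bool) (S : Finset V) : Prop :=
  ∀ x ∈ S, ∀ y ∈ S, x ≠ y → G.Adj x y ∧ c s(x, y) = b

lemma IsMonoClique.isNClique {c : Sym2 V → Bool} {b : Bool} {S : Finset V} {t : ℕ}
    (hS : G.IsMonoClique c b S) (hcard : S.card = t) : G.IsNClique t S :=
  ⟨fun _ hx _ hy hxy => (hS _ hx _ hy hxy).1, hcard⟩

lemma isRamsey_iff {t : ℕ} :
    IsRamsey t G ↔ ∀ c, ∃ (S : Finset V) (b : Bool), S.card = t ∧ G.IsMonoClique c b S :=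
  Iff.rfl

lemma deleteEdges_singleton_lt {u v : V} (huv : G.Adj u v) : G.deleteEdges {s(u, v)} < G :=
  (deleteEdges_le _).lt_of_ne fun h => by
    have : (G.deleteEdges {s(u, v)}).Adj u v := by rwa [h]
    simp at this

lemma IsMonoClique.deleteEdges_of_update [DecidableEq V] {c : Sym2 V → Bool} {a b : Bool}
    {S : Finset V} {u v : V} (hS : G.IsMonoClique (Function.update c s(u, v) a) b S)
    (huv : ¬(u ∈ S ∧ v ∈ S)) :
    (G.deleteEdges {s(u, v)}).IsMonoClique c b S := by
  intro x hx y hy hxy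
  have hne : s(x, y) ≠ s(u, v) := by
    intro h
    rcases Sym2.eq_iff.mp h with ⟨rfl, rfl⟩ | ⟨rfl, rfl⟩ <;> tauto
  obtain ⟨hadj, hcol⟩ := hS x hx y hy hxy
  exact ⟨by simp [hadj, hne], by rwa [Function.update_of_ne hne] at hcol⟩

variable [DecidableEq V] {t : ℕ} {u v : V} {c : Sym2 V → Bool}

lemma exists_isNClique_of_update (hG : IsRamsey t G) (huv : G.Adj u v)
    (hc : ∀ (S : Finset V) (b : Bool), S.card = t →
      ¬(G.deleteEdges {s(u, v)}).IsMonoClique c b S)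
    (b : Bool) :
    ∃ S : Finset V, G.IsNClique t S ∧ u ∈ S ∧ v ∈ S ∧
      ∀ w ∈ S, w ≠ u → w ≠ v → c s(u, w) = b := by
  obtain ⟨S, b', hcard, hS⟩ := isRamsey_iff.mp hG (Function.update c s(u, v) b)
  obtain ⟨hu, hv⟩ : u ∈ S ∧ v ∈ S := by
    by_contra h
    exact hc S b' hcard (hS.deleteEdges_of_update h)
  have hb : b' = b := by
    simpa using (hS u hu v hv (G.ne_of_adj huv)).2.symm
  refine ⟨S, hS.isNClique hcard, hu, hv, fun w hw hwu hwv => ?_⟩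
  have hne : s(u, w) ≠ s(u, v) := fun h => hwv (Sym2.congr_right.mp h)
  simpa [hne, hb] using (hS u hu w hw (Ne.symm hwu)).2

end SimpleGraph

open SimpleGraph in
theorem edge_is_intersection_of_two_cliques_general {V : Type*} [DecidableEq V] (t : ℕ)
    (G : SimpleGraph V) (hG : IsRamseyCritical t G) (u v : V) (huv : G.Adj u v) :
    ∃ Q₁ Q₂ : Finset V, G.IsNClique t Q₁ ∧ G.IsNClique t Q₂ ∧
      u ∈ Q₁ ∧ v ∈ Q₁ ∧ u ∈ Q₂ ∧ v ∈ Q₂ ∧ Q₁ ∩ Q₂ = {u, v} := by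
  obtain ⟨c, hc⟩ : ∃ c : Sym2 V → Bool, ∀ (S : Finset V) (b : Bool), S.card = t →
      ¬(G.deleteEdges {s(u, v)}).IsMonoClique c b S := by
    simpa only [isRamsey_iff, not_forall, not_exists, not_and] using
      hG.2 _ (deleteEdges_singleton_lt huv)
  obtain ⟨Q₁, hQ₁, hu₁, hv₁, hcol₁⟩ := exists_isNClique_of_update hG.1 huv hc true
  obtain ⟨Q₂, hQ₂, hu₂, hv₂, hcol₂⟩ := exists_isNClique_of_update hG.1 huv hc false
  refine ⟨Q₁, Q₂, hQ₁, hQ₂, hu₁, hv₁, hu₂, hv₂, ?_⟩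
  refine subset_antisymm (fun w hw => ?_)
    (by simp [Finset.insert_subset_iff, hu₁, hu₂, hv₁, hv₂])
  rw [Finset.mem_inter] at hw
  by_contra hwuv
  obtain ⟨hwu, hwv⟩ : w ≠ u ∧ w ≠ v := by simpa [not_or] using hwuv
  simpa [hcol₁ w hw.1 hwu hwv] using hcol₂ w hw.2 hwu hwv

/-- If `G` is `K_t`-Ramsey critical (`t ≥ 3`), then every edge `{u,v}` of `G` is the
intersection of two copies of `K_t` in `G`: there are `t`-cliques `Q₁, Q₂`, both containing
`u` and `v`, with `Q₁ ∩ Q₂ = {u, v}`. -/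
theorem edge_is_intersection_of_two_cliques {V : Type*} [DecidableEq V] (t : ℕ) (ht : 3 ≤ t)
    (G : SimpleGraph V) (hG : IsRamseyCritical t G) (u v : V) (huv : G.Adj u v) :
    ∃ Q₁ Q₂ : Finset V, G.IsNClique t Q₁ ∧ G.IsNClique t Q₂ ∧
      u ∈ Q₁ ∧ v ∈ Q₁ ∧ u ∈ Q₂ ∧ v ∈ Q₂ ∧ Q₁ ∩ Q₂ = {u, v} :=
  edge_is_intersection_of_two_cliques_general t G hG u v huv
end

section
/- Every r-critical graph on at most 2r - 2 vertices can be written as the join of two smaller critical graphs: there exist integers a, b ≥ 1 with a + b = r, an a-critical graph A and a b-critical graph B, such that G is isomorphic to the join of A and B (the graph obtained from the disjoint union of A and B by adding all edges between V(A) and V(B)). -/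
/-- `G` is `r`-critical: `G` has chromatic number at least `r`, but no proper induced
subgraph of `G` has chromatic number at least `r`. -/
def IsCritical {V : Type*} (r : ℕ) (G : SimpleGraph V) : Prop :=
  (r : ℕ∞) ≤ G.chromaticNumber ∧
    ∀ S : Set V, S ≠ Set.univ → (G.induce S).chromaticNumber < (r : ℕ∞)

/-- The join of two graphs: their disjoint union together with all edges between the two
vertex sets. -/
def graphJoin {α β : Type*} (A : SimpleGraph α) (B : SimpleGraph β) :
    SimpleGraph (α ⊕ β) where
  Adj x y := match x, y with
    | Sum.inl a, Sum.inl a' => A.Adj a a'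
    | Sum.inr b, Sum.inr b' => B.Adj b b'
    | Sum.inl _, Sum.inr _ => True
    | Sum.inr _, Sum.inl _ => True
  symm := by
    constructor
    rintro (a | b) (a' | b') h
    · exact h.symm
    · trivial
    · trivial
    · exact h.symm
  loopless := by
    constructor
    rintro (a | b) h
    · exact A.irrefl h
    · exact B.irrefl h

/-!
By induction on `|W|`, every critical vertex set `W` with `|W| ≤ 2χ(W) - 2` is the join of two
nonempty parts; both parts are then critical, with chromatic numbers adding up to `χ(W)`.

If `W` is a clique, split off one vertex. Otherwise delete two non-adjacent vertices `u, w`: the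
rest still needs `χ(W) - 1` colours, so it contains a `(χ(W) - 1)`-critical set `W₀`. Splitting
`W₀` recursively (induction) cuts it into pairwise completely joined critical parts, and the
bound `2χ(W₀) ≤ |W₀| + #parts` shows that `Z = W \ W₀` has at most `#parts` vertices. If some
part is complete to `Z`, it splits off `W`. Otherwise let `N(z)` be the set of parts containing a
non-neighbour of `z` and pick `Y ⊊ Z` of maximal deficiency `|Y| - |N(Y)|`; by Hall's theorem the
vertices of `Z \ Y` are matched to distinct parts outside `N(Y)`, each containing a non-neighbour
of its vertex. Colour `W₀ ∪ Y` with `χ(W) - 1` colours, recolour every matched part inside its own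
palette so that the non-neighbour gets a private colour, and give that colour to the matched
vertex: `W` gets coloured with `χ(W) - 1` colours, a contradiction.
-/

open Set

theorem Finset.exists_ssubset_injOn_mem_sdiff_biUnion {ι κ : Type*} [DecidableEq ι]
    [DecidableEq κ] {Z : Finset ι} (t : ι → Finset κ) (hZ : Z.Nonempty)
    (hcard : Z.card ≤ (Z.biUnion t).card) :
    ∃ Y ⊂ Z, ∃ g : ι → κ, InjOn g ↑(Z \ Y) ∧ ∀ z ∈ Z \ Y, g z ∈ t z \ Y.biUnion t := by
  let d : Finset ι → ℤ := fun Y => Y.card - (Y.biUnion t).card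
  obtain ⟨Y, hYZ, hYmax⟩ := Z.ssubsets.exists_max_image d ⟨∅, Finset.empty_mem_ssubsets hZ⟩
  rw [Finset.mem_ssubsets] at hYZ
  have hmax : ∀ Y' ⊆ Z, d Y' ≤ d Y := by
    intro Y' hY'
    obtain hlt | rfl := hY'.ssubset_or_eq
    · exact hYmax Y' (Finset.mem_ssubsets.2 hlt)
    · have := hYmax ∅ (Finset.empty_mem_ssubsets hZ)
      simp only [d, Finset.card_empty, Finset.biUnion_empty] at this ⊢
      omega
  -- maximality of the deficiency of `Y` is Hall's condition for `Z \ Y` outside `Y.biUnion t`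
  have hhall : ∀ s : Finset ↥(Z \ Y), s.card ≤ (s.biUnion fun z => t z \ Y.biUnion t).card := by
    intro s
    let s' := s.map (Function.Embedding.subtype _)
    have hs' : s' ⊆ Z \ Y := by
      intro z hz
      obtain ⟨⟨z, hz'⟩, -, rfl⟩ := Finset.mem_map.1 hz
      exact hz'
    have hcover : (Y ∪ s').biUnion t ⊆ Y.biUnion t ∪ s.biUnion fun z => t z \ Y.biUnion t := by
      intro X hX
      simp only [Finset.mem_biUnion, Finset.mem_union, Finset.mem_sdiff] at hX ⊢
      obtain ⟨z, hz | hz, hXz⟩ := hX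
      · exact Or.inl ⟨z, hz, hXz⟩
      · by_cases hXY : ∃ y ∈ Y, X ∈ t y
        · exact Or.inl hXY
        · obtain ⟨⟨z, hz'⟩, hzs, rfl⟩ := Finset.mem_map.1 hz
          exact Or.inr ⟨⟨z, hz'⟩, hzs, hXz, hXY⟩
    have h1 := hmax _ (Finset.union_subset hYZ.subset (hs'.trans Finset.sdiff_subset))
    have h2 := (Finset.card_le_card hcover).trans (Finset.card_union_le _ _)
    simp only [d] at h1
    rw [Finset.card_union_of_disjoint (Finset.disjoint_of_subset_right hs' Finset.disjoint_sdiff),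
      Finset.card_map] at h1
    omega
  obtain ⟨f, hfinj, hf⟩ := (Finset.all_card_le_biUnion_card_iff_exists_injective _).1 hhall
  obtain ⟨z₀, hz₀Z, hz₀Y⟩ := Finset.exists_of_ssubset hYZ
  refine ⟨Y, hYZ, fun z => if hz : z ∈ Z \ Y then f ⟨z, hz⟩
    else f ⟨z₀, Finset.mem_sdiff.2 ⟨hz₀Z, hz₀Y⟩⟩, ?_, fun z hz => ?_⟩
  · intro z hz z' hz' h
    simp only [Finset.mem_coe] at hz hz'
    exact congrArg Subtype.val (hfinj (by simpa [hz, hz'] using h))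
  · simpa [hz] using hf ⟨z, hz⟩

namespace SimpleGraph

variable {V α : Type*} {G : SimpleGraph V} {S T W : Set V}

def IsColoringOn (G : SimpleGraph V) (S : Set V) (f : V → α) : Prop :=
  ∀ ⦃x⦄, x ∈ S → ∀ ⦃y⦄, y ∈ S → G.Adj x y → f x ≠ f y

lemma IsColoringOn.mono {f : V → α} (hf : G.IsColoringOn T f) (h : S ⊆ T) : G.IsColoringOn S f :=
  fun _ hx _ hy => hf (h hx) (h hy)

lemma IsCompleteBetween.disjoint_image {U : Set V} {f : V → α} (h : G.IsCompleteBetween S T)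
    (hf : G.IsColoringOn U f) (hS : S ⊆ U) (hT : T ⊆ U) : Disjoint (f '' S) (f '' T) := by
  rw [Set.disjoint_left]
  rintro _ ⟨x, hx, rfl⟩ ⟨y, hy, hxy⟩
  exact hf (hS hx) (hT hy) (h hx hy) hxy.symm

lemma IsColoringOn.exists_patch {ι : Type*} {I : Set ι} {U : Set V} {φ : V → α}
    (hφ : G.IsColoringOn U φ) (D : ι → Set V) (pal : ι → Set α) (ψ : ι → V → α)
    (hD : I.PairwiseDisjoint D) (hpal : I.PairwiseDisjoint pal)
    (hψ : ∀ i ∈ I, G.IsColoringOn (D i) (ψ i)) (hψpal : ∀ i ∈ I, MapsTo (ψ i) (D i) (pal i))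
    (hφpal : ∀ v ∈ U, (¬ ∃ i ∈ I, v ∈ D i) → ∀ i ∈ I, φ v ∉ pal i) :
    ∃ f : V → α, G.IsColoringOn (U ∪ ⋃ i ∈ I, D i) f ∧
      MapsTo f (U ∪ ⋃ i ∈ I, D i) (φ '' U ∪ ⋃ i ∈ I, pal i) := by
  classical
  let f : V → α := fun v => if h : ∃ i ∈ I, v ∈ D i then ψ h.choose v else φ v
  have hf_in {i v} (hi : i ∈ I) (hv : v ∈ D i) : f v = ψ i v := by
    have h : ∃ i ∈ I, v ∈ D i := ⟨i, hi, hv⟩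
    have hchoose : h.choose = i :=
      hD.elim h.choose_spec.1 hi (not_disjoint_iff.2 ⟨v, h.choose_spec.2, hv⟩)
    simp only [f, dif_pos h, hchoose]
  have hf_out {v} (hv : ¬ ∃ i ∈ I, v ∈ D i) : f v = φ v := by
    simp only [f, dif_neg hv]
  have hU {v} (hv : v ∈ U ∪ ⋃ i ∈ I, D i) (hv' : ¬ ∃ i ∈ I, v ∈ D i) : v ∈ U :=
    hv.resolve_right fun h => hv' (by simpa using h)
  have hpatched {i a b} (hi : i ∈ I) (ha : a ∈ D i) (hb : b ∈ U ∪ ⋃ i ∈ I, D i)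
      (hab : G.Adj a b) : f a ≠ f b := by
    rw [hf_in hi ha]
    by_cases hb' : ∃ j ∈ I, b ∈ D j
    · obtain ⟨j, hj, hbj⟩ := hb'
      rw [hf_in hj hbj]
      obtain rfl | hij := eq_or_ne i j
      · exact hψ i hi ha hbj hab
      · exact fun h => Set.disjoint_left.1 (hpal hi hj hij) (hψpal i hi ha) (h ▸ hψpal j hj hbj)
    · rw [hf_out hb']
      exact fun h => hφpal b (hU hb hb') hb' i hi (h ▸ hψpal i hi ha)
  refine ⟨f, fun a ha b hb hab => ?_, fun v hv => ?_⟩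
  · by_cases ha' : ∃ i ∈ I, a ∈ D i
    · obtain ⟨i, hi, hai⟩ := ha'
      exact hpatched hi hai hb hab
    by_cases hb' : ∃ i ∈ I, b ∈ D i
    · obtain ⟨i, hi, hbi⟩ := hb'
      exact (hpatched hi hbi ha hab.symm).symm
    rw [hf_out ha', hf_out hb']
    exact hφ (hU ha ha') (hU hb hb') hab
  · by_cases hv' : ∃ i ∈ I, v ∈ D i
    · obtain ⟨i, hi, hvi⟩ := hv'
      rw [hf_in hi hvi]
      exact Or.inr (mem_biUnion hi (hψpal i hi hvi))
    · rw [hf_out hv']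
      exact Or.inl (mem_image_of_mem φ (hU hv hv'))

noncomputable def chromOn (G : SimpleGraph V) (S : Set V) : ℕ :=
  (G.induce S).chromaticNumber.toNat

lemma chromOn_induce (S : Set W) : (G.induce W).chromOn S = G.chromOn (Subtype.val '' S) := by
  let e := (Embedding.induce (G := G) W).comp (Embedding.induce (G := G.induce W) S)
  have he : range e = Subtype.val '' S := by
    change range (Subtype.val ∘ Subtype.val) = _
    rw [range_comp, Subtype.range_coe]
  unfold chromOn
  rw [chromaticNumber_congr e.isoInduceRange, he]

def IsCriticalOn (G : SimpleGraph V) (W : Set V) (r : ℕ) : Prop :=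
  r ≤ G.chromOn W ∧ ∀ S ⊂ W, G.chromOn S < r

section Finite

variable [Finite V]

lemma colorable_chromOn (G : SimpleGraph V) (S : Set V) : (G.induce S).Colorable (G.chromOn S) :=
  colorable_chromaticNumber_of_fintype _

lemma coe_chromOn (G : SimpleGraph V) (S : Set V) :
    (G.chromOn S : ℕ∞) = (G.induce S).chromaticNumber :=
  ENat.natCast_toNat fun h => by simpa [h] using (colorable_chromOn G S).chromaticNumber_le

lemma IsColoringOn.chromOn_le_ncard_image {f : V → α} (hf : G.IsColoringOn S f) :
    G.chromOn S ≤ (f '' S).ncard := by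
  classical
  have := Fintype.ofFinite V
  let c : (G.induce S).Coloring (f '' S) :=
    Coloring.mk (fun v => ⟨f v, mem_image_of_mem f v.2⟩) fun {v w} h heq =>
      hf v.2 w.2 h (congrArg Subtype.val heq)
  have := c.colorable.chromaticNumber_le
  rw [← coe_chromOn, Nat.cast_le] at this
  simpa [Set.ncard_eq_toFinset_card'] using this

lemma exists_isColoringOn_mapsTo [Nonempty α] {C : Set α} (hC : C.Finite)
    (h : G.chromOn S ≤ C.ncard) : ∃ f : V → α, G.IsColoringOn S f ∧ MapsTo f S C := by
  classical
  have := hC.fintype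
  let c : (G.induce S).Coloring C :=
    (colorable_chromOn G S).toColoring (by rwa [← Nat.card_eq_fintype_card, Nat.card_coe_set_eq])
  refine ⟨fun v => if hv : v ∈ S then c ⟨v, hv⟩ else Classical.arbitrary α, ?_, ?_⟩
  · intro x hx y hy hxy
    have hc := c.valid (show (G.induce S).Adj ⟨x, hx⟩ ⟨y, hy⟩ from hxy)
    simpa [hx, hy, Subtype.ext_iff] using hc
  · intro x hx
    simp [hx]

lemma exists_isColoringOn_lt (G : SimpleGraph V) (S : Set V) :
    ∃ f : V → ℕ, G.IsColoringOn S f ∧ ∀ x ∈ S, f x < G.chromOn S := by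
  simpa [MapsTo] using
    exists_isColoringOn_mapsTo (G := G) (S := S) (finite_Iio _) (ncard_Iio_nat _).ge

lemma IsColoringOn.chromOn_le {f : V → ℕ} {k : ℕ} (hf : G.IsColoringOn S f)
    (hk : ∀ x ∈ S, f x < k) : G.chromOn S ≤ k :=
  hf.chromOn_le_ncard_image.trans <| (ncard_Iio_nat k).le.trans' <|
    ncard_le_ncard ((image_subset_iff (t := Iio k)).2 hk) (finite_Iio k)

lemma chromOn_mono (h : S ⊆ T) : G.chromOn S ≤ G.chromOn T := by
  obtain ⟨f, hf, hlt⟩ := G.exists_isColoringOn_lt T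
  exact (hf.mono h).chromOn_le fun x hx => hlt x (h hx)

lemma chromOn_le_ncard (G : SimpleGraph V) (S : Set V) : G.chromOn S ≤ S.ncard := by
  simpa using (show G.IsColoringOn S id from fun _ _ _ _ => G.ne_of_adj).chromOn_le_ncard_image

lemma chromOn_pos_iff : 0 < G.chromOn S ↔ S.Nonempty := by
  refine ⟨fun h => nonempty_iff_ne_empty.2 ?_, fun ⟨x, hx⟩ => ?_⟩
  · rintro rfl
    simpa using h.trans_le (chromOn_le_ncard G ∅)
  · obtain ⟨f, -, hlt⟩ := G.exists_isColoringOn_lt S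
    exact (Nat.zero_le _).trans_lt (hlt x hx)

lemma chromOn_le_chromOn_sdiff_add_one {I : Set V} (hI : G.IsIndepSet I) :
    G.chromOn T ≤ G.chromOn (T \ I) + 1 := by
  classical
  obtain ⟨f, hf, hlt⟩ := G.exists_isColoringOn_lt (T \ I)
  refine IsColoringOn.chromOn_le (f := fun x => if x ∈ I then G.chromOn (T \ I) else f x) ?_ ?_
  · intro x hx y hy hxy
    by_cases hxI : x ∈ I <;> by_cases hyI : y ∈ I <;> simp only [hxI, hyI, if_true, if_false]
    · exact (hI hxI hyI hxy.ne hxy).elim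
    · exact (hlt y ⟨hy, hyI⟩).ne'
    · exact (hlt x ⟨hx, hxI⟩).ne
    · exact hf ⟨hx, hxI⟩ ⟨hy, hyI⟩ hxy
  · intro x hx
    split_ifs with hxI
    · exact lt_add_one _
    · exact (hlt x ⟨hx, hxI⟩).trans (lt_add_one _)

lemma chromOn_union_le (G : SimpleGraph V) (S T : Set V) :
    G.chromOn (S ∪ T) ≤ G.chromOn S + G.chromOn T := by
  classical
  obtain ⟨f, hf, hfS⟩ := G.exists_isColoringOn_lt S
  obtain ⟨g, hg, hgT⟩ := G.exists_isColoringOn_lt T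
  refine IsColoringOn.chromOn_le (f := fun x => if x ∈ S then f x else G.chromOn S + g x) ?_ ?_
  · intro x hx y hy hxy
    by_cases hxS : x ∈ S <;> by_cases hyS : y ∈ S <;> simp only [hxS, hyS, if_true, if_false]
    · exact hf hxS hyS hxy
    · have := hfS x hxS; omega
    · have := hfS y hyS; omega
    · have := hg (hx.resolve_left hxS) (hy.resolve_left hyS) hxy; omega
  · intro x hx
    split_ifs with hxS
    · have := hfS x hxS; omega
    · have := hgT x (hx.resolve_left hxS); omega

lemma IsCompleteBetween.chromOn_union (h : G.IsCompleteBetween S T) :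
    G.chromOn (S ∪ T) = G.chromOn S + G.chromOn T := by
  refine le_antisymm (G.chromOn_union_le S T) ?_
  obtain ⟨f, hf, hlt⟩ := G.exists_isColoringOn_lt (S ∪ T)
  calc G.chromOn S + G.chromOn T ≤ (f '' S).ncard + (f '' T).ncard :=
        add_le_add (hf.mono subset_union_left).chromOn_le_ncard_image
          (hf.mono subset_union_right).chromOn_le_ncard_image
    _ = (f '' (S ∪ T)).ncard := by
        rw [image_union, ncard_union_eq (h.disjoint_image hf subset_union_left subset_union_right)]
    _ ≤ (Iio (G.chromOn (S ∪ T))).ncard :=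
        ncard_le_ncard ((image_subset_iff (t := Iio _)).2 hlt) (finite_Iio _)
    _ = G.chromOn (S ∪ T) := ncard_Iio_nat _

lemma IsCriticalOn.chromOn_eq (h : G.IsCriticalOn W r) : G.chromOn W = r := by
  refine le_antisymm ?_ h.1
  obtain rfl | ⟨x, hx⟩ := W.eq_empty_or_nonempty
  · exact (chromOn_le_ncard G ∅).trans (by simp)
  · calc G.chromOn W ≤ G.chromOn (W \ {x}) + 1 :=
          chromOn_le_chromOn_sdiff_add_one (pairwise_singleton _ _)
      _ ≤ r := h.2 _ (sdiff_singleton_ssubset.2 hx)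

lemma exists_isCriticalOn_subset (h : r ≤ G.chromOn T) : ∃ W ⊆ T, G.IsCriticalOn W r := by
  obtain ⟨W, hW, hmin⟩ :=
    (wellFounded_lt (α := Set V)).has_min {W | W ⊆ T ∧ r ≤ G.chromOn W} ⟨T, subset_rfl, h⟩
  exact ⟨W, hW.1, hW.2, fun S hS => not_le.1 fun hr => hmin S ⟨hS.subset.trans hW.1, hr⟩ hS⟩

lemma IsCriticalOn.of_isCompleteBetween (h : G.IsCriticalOn (S ∪ T) r)
    (hST : G.IsCompleteBetween S T) : G.IsCriticalOn S (G.chromOn S) := by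
  refine ⟨le_rfl, fun S' hS' => ?_⟩
  obtain ⟨x, hxS, hxS'⟩ := exists_of_ssubset hS'
  have hlt : S' ∪ T ⊂ S ∪ T := by
    refine ssubset_of_subset_not_subset (union_subset_union_left T hS'.subset) fun hsub => ?_
    rcases hsub (Or.inl hxS) with hx | hx
    · exact hxS' hx
    · exact Set.disjoint_left.1 hST.disjoint hxS hx
  have := h.2 _ hlt
  rw [(show G.IsCompleteBetween S' T from fun _ hx _ hy => hST (hS'.subset hx) hy).chromOn_union,
    ← h.chromOn_eq, hST.chromOn_union] at this
  omega

lemma isCritical_iff_isCriticalOn_univ : IsCritical r G ↔ G.IsCriticalOn univ r := by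
  have huniv : (G.chromOn univ : ℕ∞) = G.chromaticNumber :=
    (coe_chromOn G univ).trans (chromaticNumber_congr G.induceUnivIso)
  unfold IsCritical IsCriticalOn
  rw [← huniv, Nat.cast_le]
  refine and_congr_right' (forall_congr' fun S => ?_)
  rw [← coe_chromOn, Nat.cast_lt, ssubset_univ_iff]

lemma isCritical_induce_iff : IsCritical r (G.induce W) ↔ G.IsCriticalOn W r := by
  have hiff (S : Set W) : Subtype.val '' S ⊂ Subtype.val '' univ ↔ S ⊂ univ :=
    Subtype.val_injective.injOn.image_ssubset_image_iff (subset_univ _) (subset_univ _)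
  rw [isCritical_iff_isCriticalOn_univ]
  unfold IsCriticalOn
  simp only [chromOn_induce, Subtype.coe_image_univ]
  refine and_congr_right' ⟨fun h S hS => ?_, fun h S hS => h _ ?_⟩
  · have hS' : Subtype.val '' (Subtype.val ⁻¹' S : Set W) = S := by
      rw [Subtype.image_preimage_coe, inter_eq_right.2 hS.subset]
    refine hS' ▸ h _ ((hiff _).1 ?_)
    rwa [hS', image_univ, Subtype.range_coe]
  · simpa using (hiff S).2 hS

lemma exists_isColoringOn_insert_of_not_adj {X : Set V} {x z : V} {C : Set α} (hx : x ∈ X)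
    (hzx : ¬ G.Adj z x) (hC : C.Finite) (hXC : G.chromOn (X \ {x}) < C.ncard) :
    ∃ ψ : V → α, G.IsColoringOn (insert z X) ψ ∧ MapsTo ψ (insert z X) C := by
  classical
  obtain ⟨c, hc⟩ : C.Nonempty := nonempty_of_ncard_ne_zero (by omega)
  have : Nonempty α := ⟨c⟩
  obtain ⟨f, hf, hfC⟩ := exists_isColoringOn_mapsTo (G := G) (S := X \ {x}) (C := C \ {c})
    hC.sdiff (by rw [ncard_sdiff_singleton_of_mem hc]; omega)
  have hrest {v} (hv : v ∈ insert z X) (hvxz : ¬(v = x ∨ v = z)) : v ∈ X \ {x} :=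
    ⟨hv.resolve_left fun h => hvxz (Or.inr h), fun h => hvxz (Or.inl h)⟩
  refine ⟨fun v => if v = x ∨ v = z then c else f v, fun v hv w hw hvw => ?_, fun v hv => ?_⟩
  · by_cases hvxz : v = x ∨ v = z <;> by_cases hwxz : w = x ∨ w = z <;>
      simp only [hvxz, hwxz, if_true, if_false]
    · rcases hvxz with rfl | rfl <;> rcases hwxz with rfl | rfl <;>
        first | exact (G.irrefl hvw).elim | exact (hzx hvw).elim | exact (hzx hvw.symm).elim
    · exact fun h => (hfC (hrest hw hwxz)).2 h.symm
    · exact (hfC (hrest hv hvxz)).2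
    · exact hf (hrest hv hvxz) (hrest hw hwxz) hvw
  · dsimp only
    split_ifs with hvxz
    · exact hc
    · exact (hfC (hrest hv hvxz)).1

lemma chromOn_union_le_of_hosts {S R : Set V} (host : V → Set V) (hSR : Disjoint S R)
    (hdisj : R.PairwiseDisjoint host) (hsub : ∀ z ∈ R, host z ⊆ S)
    (hcrit : ∀ z ∈ R, G.IsCriticalOn (host z) (G.chromOn (host z)))
    (hnonadj : ∀ z ∈ R, ∃ x ∈ host z, ¬ G.Adj z x)
    (hcomplete : ∀ z ∈ R, G.IsCompleteBetween (S \ host z) (host z)) :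
    G.chromOn (S ∪ R) ≤ G.chromOn S := by
  obtain ⟨φ, hφ, hφS⟩ := G.exists_isColoringOn_lt S
  have hψ (z) (hz : z ∈ R) : ∃ ψ : V → ℕ,
      G.IsColoringOn (insert z (host z)) ψ ∧ MapsTo ψ (insert z (host z)) (φ '' host z) := by
    obtain ⟨x, hx, hzx⟩ := hnonadj z hz
    exact exists_isColoringOn_insert_of_not_adj hx hzx (toFinite _)
      (((hcrit z hz).2 _ (sdiff_singleton_ssubset.2 hx)).trans_le
        (hφ.mono (hsub z hz)).chromOn_le_ncard_image)
  choose! ψ hψ hψφ using hψ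
  have hD : R.PairwiseDisjoint fun z => insert z (host z) := by
    intro z hz z' hz' hne
    rw [Function.onFun, disjoint_insert_left, disjoint_insert_right, mem_insert_iff, not_or]
    exact ⟨⟨hne, fun h => Set.disjoint_left.1 hSR (hsub z' hz' h) hz⟩,
      fun h => Set.disjoint_left.1 hSR (hsub z hz h) hz', hdisj hz hz' hne⟩
  have hpal : R.PairwiseDisjoint fun z => φ '' host z := by
    intro z hz z' hz' hne
    have hz'z : host z' ⊆ S \ host z :=
      fun v hv => ⟨hsub z' hz' hv, fun hv' => Set.disjoint_left.1 (hdisj hz hz' hne) hv' hv⟩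
    exact ((hcomplete z hz).symm.disjoint_image hφ (hsub z hz) sdiff_subset).mono_right
      (image_mono hz'z)
  obtain ⟨f, hf, hfφ⟩ := hφ.exists_patch _ _ ψ hD hpal hψ hψφ fun v hv hv' z hz ⟨x, hx, hxv⟩ =>
    hφ hv (hsub z hz hx)
      (hcomplete z hz ⟨hv, fun h => hv' ⟨z, hz, Or.inr h⟩⟩ hx) hxv.symm
  refine (chromOn_mono ?_).trans (hf.chromOn_le fun v hv => ?_)
  · exact union_subset_union_right S fun z hz => mem_biUnion hz (mem_insert z _)
  · rcases hfφ hv with ⟨x, hx, hxv⟩ | hv'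
    · exact hxv ▸ hφS x hx
    · obtain ⟨z, hz, x, hx, hxv⟩ := mem_iUnion₂.1 hv'
      exact hxv ▸ hφS x (hsub z hz hx)

end Finite

structure IsJoinDecomposition (G : SimpleGraph V) (W : Set V) (P : Finset (Set V)) : Prop where
  sUnion_eq : ⋃₀ (P : Set (Set V)) = W
  nonempty : ∀ X ∈ P, X.Nonempty
  isCriticalOn : ∀ X ∈ P, G.IsCriticalOn X (G.chromOn X)
  pairwise_isCompleteBetween : (P : Set (Set V)).Pairwise G.IsCompleteBetween

namespace IsJoinDecomposition

variable {P Q : Finset (Set V)} {X : Set V}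

lemma subset (hP : G.IsJoinDecomposition W P) (hX : X ∈ P) : X ⊆ W :=
  hP.sUnion_eq ▸ subset_sUnion_of_mem hX

lemma isCompleteBetween_sdiff (hP : G.IsJoinDecomposition W P) (hX : X ∈ P) :
    G.IsCompleteBetween X (W \ X) := by
  rintro x hx y ⟨hyW, hyX⟩
  obtain ⟨Y, hY, hyY⟩ := hP.sUnion_eq ▸ hyW
  exact hP.pairwise_isCompleteBetween hX hY (fun h => hyX (h ▸ hyY)) hx hyY

lemma singleton (hW : G.IsCriticalOn W (G.chromOn W)) (hne : W.Nonempty) :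
    G.IsJoinDecomposition W {W} where
  sUnion_eq := by simp
  nonempty := by simpa
  isCriticalOn := by simpa
  pairwise_isCompleteBetween := by simp

lemma union [DecidableEq (Set V)] (hP : G.IsJoinDecomposition S P)
    (hQ : G.IsJoinDecomposition T Q) (hST : G.IsCompleteBetween S T) :
    G.IsJoinDecomposition (S ∪ T) (P ∪ Q) where
  sUnion_eq := by rw [Finset.coe_union, sUnion_union, hP.sUnion_eq, hQ.sUnion_eq]
  nonempty X hX := (Finset.mem_union.1 hX).elim (hP.nonempty X) (hQ.nonempty X)
  isCriticalOn X hX := (Finset.mem_union.1 hX).elim (hP.isCriticalOn X) (hQ.isCriticalOn X)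
  pairwise_isCompleteBetween := by
    rw [Finset.coe_union, pairwise_union]
    refine ⟨hP.pairwise_isCompleteBetween, hQ.pairwise_isCompleteBetween, fun X hX Y hY _ => ?_⟩
    have hXY : G.IsCompleteBetween X Y := fun _ hx _ hy => hST (hP.subset hX hx) (hQ.subset hY hy)
    exact ⟨hXY, hXY.symm⟩

lemma disjoint (hP : G.IsJoinDecomposition S P) (hQ : G.IsJoinDecomposition T Q)
    (hST : Disjoint S T) : Disjoint P Q :=
  Finset.disjoint_left.2 fun X hXP hXQ =>
    (hP.nonempty X hXP).ne_empty (subset_empty_iff.1 (hST (hP.subset hXP) (hQ.subset hXQ)))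

end IsJoinDecomposition

def SplitsAsJoin (G : SimpleGraph V) (W : Set V) : Prop :=
  ∃ T ⊆ W, T.Nonempty ∧ (W \ T).Nonempty ∧ G.IsCompleteBetween T (W \ T)

lemma splitsAsJoin_of_isClique (hW : G.IsClique W) (hcard : 2 ≤ W.ncard) : G.SplitsAsJoin W := by
  obtain ⟨x, hx⟩ := nonempty_of_ncard_ne_zero (s := W) (by omega)
  refine ⟨{x}, singleton_subset_iff.2 hx, singleton_nonempty x, ?_, ?_⟩
  · exact nonempty_of_ncard_ne_zero (by rw [ncard_sdiff_singleton_of_mem hx]; omega)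
  · rintro _ rfl y ⟨hyW, hyx⟩
    exact hW hx hyW (Ne.symm hyx)

lemma IsJoinDecomposition.splitsAsJoin_of_isCompleteBetween {W₀ X : Set V}
    {P : Finset (Set V)} (hP : G.IsJoinDecomposition W₀ P) (hX : X ∈ P) (hW₀ : W₀ ⊆ W)
    (hZ : (W \ W₀).Nonempty) (hXZ : G.IsCompleteBetween X (W \ W₀)) : G.SplitsAsJoin W := by
  refine ⟨X, (hP.subset hX).trans hW₀, hP.nonempty X hX,
    hZ.mono (sdiff_subset_sdiff_right (hP.subset hX)), fun x hx y ⟨hyW, hyX⟩ => ?_⟩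
  by_cases hy : y ∈ W₀
  · exact hP.isCompleteBetween_sdiff hX hx ⟨hy, hyX⟩
  · exact hXZ hx ⟨hyW, hy⟩

noncomputable def IsCompleteBetween.graphJoinIso {T : Set V} (h : G.IsCompleteBetween T Tᶜ) :
    graphJoin (G.induce T) (G.induce Tᶜ) ≃g G where
  toEquiv := by classical exact Equiv.Set.sumCompl T
  map_rel_iff' := by
    rintro (⟨a, ha⟩ | ⟨a, ha⟩) (⟨b, hb⟩ | ⟨b, hb⟩)
    · rfl
    · simpa [graphJoin] using h ha hb
    · simpa [graphJoin] using (h hb ha).symm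
    · rfl

lemma exists_ssubset_injOn_hosts [DecidableEq V] {P : Finset (Set V)} {Z : Finset V}
    (hZ : Z.Nonempty) (hcard : Z.card ≤ P.card) (hP : ∀ X ∈ P, ∃ x ∈ X, ∃ z ∈ Z, ¬ G.Adj z x) :
    ∃ Y ⊂ Z, ∃ host : V → Set V, InjOn host ↑(Z \ Y) ∧ ∀ z ∈ Z \ Y,
      host z ∈ P ∧ (∃ x ∈ host z, ¬ G.Adj z x) ∧ ∀ y ∈ Y, ∀ x ∈ host z, G.Adj y x := by
  classical
  let t : V → Finset (Set V) := fun z => {X ∈ P | ∃ x ∈ X, ¬ G.Adj z x}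
  have hcover : Z.biUnion t = P := by
    refine (Finset.biUnion_subset.2 fun z _ => Finset.filter_subset _ _).antisymm fun X hX => ?_
    obtain ⟨x, hx, z, hz, hzx⟩ := hP X hX
    exact Finset.mem_biUnion.2 ⟨z, hz, Finset.mem_filter.2 ⟨hX, x, hx, hzx⟩⟩
  obtain ⟨Y, hYZ, host, hinj, hhost⟩ :=
    Finset.exists_ssubset_injOn_mem_sdiff_biUnion t hZ (hcover ▸ hcard)
  refine ⟨Y, hYZ, host, hinj, fun z hz => ?_⟩
  obtain ⟨hzt, hzY⟩ := Finset.mem_sdiff.1 (hhost z hz)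
  obtain ⟨hzP, hnonadj⟩ := Finset.mem_filter.1 hzt
  refine ⟨hzP, hnonadj, fun y hy x hx => ?_⟩
  by_contra hyx
  exact hzY (Finset.mem_biUnion.2 ⟨y, hy, Finset.mem_filter.2 ⟨hzP, x, hx, hyx⟩⟩)

def SmallCriticalSetsSplit (G : SimpleGraph V) (n : ℕ) : Prop :=
  ∀ W r, W.ncard < n → G.IsCriticalOn W r → W.ncard + 2 ≤ 2 * r → G.SplitsAsJoin W

section Finite

variable [Finite V]

lemma SmallCriticalSetsSplit.exists_isJoinDecomposition {n : ℕ}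
    (hsplit : G.SmallCriticalSetsSplit n) (hW : G.IsCriticalOn W r) (hne : W.Nonempty)
    (hn : W.ncard < n) : ∃ P, G.IsJoinDecomposition W P ∧ 2 * r ≤ W.ncard + P.card := by
  classical
  induction hm : W.ncard using Nat.strong_induction_on generalizing W r with
  | _ m ih =>
  subst hm
  by_cases hsmall : 2 * r ≤ W.ncard + 1
  · exact ⟨{W}, .singleton (hW.chromOn_eq ▸ hW) hne, by simpa using hsmall⟩
  obtain ⟨T, hTW, hT, hT', hjoin⟩ := hsplit W r hn hW (by omega)
  have hW' : G.IsCriticalOn (T ∪ (W \ T)) r := by rwa [union_sdiff_cancel hTW]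
  have hsum := hjoin.chromOn_union
  rw [union_sdiff_cancel hTW, hW.chromOn_eq] at hsum
  have hcard := ncard_sdiff_add_ncard_of_subset hTW
  have := hT.ncard_pos
  have := hT'.ncard_pos
  obtain ⟨P, hP, hPcard⟩ := ih T.ncard (by omega) (hW'.of_isCompleteBetween hjoin) hT (by omega) rfl
  obtain ⟨Q, hQ, hQcard⟩ := ih (W \ T).ncard (by omega)
    ((union_comm T _ ▸ hW').of_isCompleteBetween hjoin.symm) hT' (by omega) rfl
  refine ⟨P ∪ Q, union_sdiff_cancel hTW ▸ hP.union hQ hjoin, ?_⟩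
  rw [Finset.card_union_of_disjoint (hP.disjoint hQ hjoin.disjoint)]
  omega

lemma IsJoinDecomposition.exists_ssubset_chromOn_le {W₀ : Set V} {P : Finset (Set V)}
    (hP : G.IsJoinDecomposition W₀ P) (hW₀ : W₀ ⊆ W) (hZ : (W \ W₀).Nonempty)
    (hcard : (W \ W₀).ncard ≤ P.card) (hP' : ∀ X ∈ P, ¬ G.IsCompleteBetween X (W \ W₀)) :
    ∃ S ⊂ W, G.chromOn W ≤ G.chromOn S := by
  classical
  have := Fintype.ofFinite V
  set Z := (W \ W₀).toFinset
  have hZW : (Z : Set V) = W \ W₀ := coe_toFinset _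
  obtain ⟨Y, hYZ, host, hinj, hhost⟩ := exists_ssubset_injOn_hosts (G := G) (Z := Z)
    (toFinset_nonempty.2 hZ) (by rwa [← ncard_eq_toFinset_card'])
    fun X hX => by
      obtain ⟨x, hx, z, hz, hxz⟩ : ∃ x ∈ X, ∃ z ∈ W \ W₀, ¬ G.Adj x z := by
        simpa only [IsCompleteBetween, not_forall, exists_prop] using hP' X hX
      exact ⟨x, hx, z, mem_toFinset.2 hz, fun h => hxz h.symm⟩
  choose hhostP hnonadj hYadj using hhost
  have hYZ' : (Y : Set V) ⊆ W \ W₀ := hZW ▸ Finset.coe_subset.2 hYZ.subset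
  have hW : W = (W₀ ∪ ↑Y) ∪ ↑(Z \ Y) := by
    rw [Finset.coe_sdiff, hZW]
    ext v
    have hvY := @hYZ' v
    have hvW₀ := @hW₀ v
    simp only [mem_union, mem_sdiff, Finset.mem_coe] at hvY ⊢
    tauto
  obtain ⟨z₀, hz₀Z, hz₀Y⟩ := Finset.exists_of_ssubset hYZ
  have hz₀ : z₀ ∈ W \ W₀ := hZW ▸ hz₀Z
  refine ⟨W₀ ∪ Y, ssubset_of_subset_not_subset (union_subset hW₀ (hYZ'.trans sdiff_subset))
    fun h => (h hz₀.1).elim hz₀.2 hz₀Y, ?_⟩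
  refine (congrArg G.chromOn hW).trans_le (chromOn_union_le_of_hosts host ?_ ?_ ?_ ?_ ?_ ?_)
  · refine Set.disjoint_left.2 fun v hv hv' => ?_
    obtain ⟨hvZ, hvY⟩ := Finset.mem_sdiff.1 hv'
    exact hv.elim (hZW ▸ hvZ : v ∈ W \ W₀).2 hvY
  · exact fun z hz z' hz' hne =>
      (hP.pairwise_isCompleteBetween (hhostP z hz) (hhostP z' hz') (hinj.ne hz hz' hne)).disjoint
  · exact fun z hz => (hP.subset (hhostP z hz)).trans subset_union_left
  · exact fun z hz => hP.isCriticalOn _ (hhostP z hz)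
  · exact hnonadj
  · rintro z hz v ⟨hv | hv, hvX⟩ x hx
    · exact hP.isCompleteBetween_sdiff (hhostP z hz) hx ⟨hv, hvX⟩ |>.symm
    · exact hYadj z hz v hv x hx

lemma SmallCriticalSetsSplit.splitsAsJoin (hsplit : G.SmallCriticalSetsSplit W.ncard)
    (hW : G.IsCriticalOn W r) (hcard : W.ncard + 2 ≤ 2 * r) : G.SplitsAsJoin W := by
  have hr : r ≤ W.ncard := hW.chromOn_eq ▸ G.chromOn_le_ncard W
  by_cases hclique : G.IsClique W
  · exact splitsAsJoin_of_isClique hclique (by omega)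
  obtain ⟨u, hu, w, hw, huw, hadj⟩ : ∃ u ∈ W, ∃ w ∈ W, u ≠ w ∧ ¬ G.Adj u w := by
    simpa [IsClique, Set.Pairwise] using hclique
  obtain ⟨W₀, hW₀, hW₀crit⟩ : ∃ W₀ ⊆ W \ {u, w}, G.IsCriticalOn W₀ (r - 1) := by
    refine exists_isCriticalOn_subset ?_
    have := chromOn_le_chromOn_sdiff_add_one (G := G) (T := W)
      (pairwise_pair.2 fun _ => ⟨hadj, fun h => hadj h.symm⟩)
    rw [hW.chromOn_eq] at this
    omega
  have huW₀ : u ∉ W₀ := fun h => (hW₀ h).2 (mem_insert u _)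
  have hW₀W : W₀ ⊂ W :=
    ssubset_of_subset_not_subset (hW₀.trans sdiff_subset) fun h => huW₀ (h hu)
  have hW₀ne : W₀.Nonempty := chromOn_pos_iff.1 (by rw [hW₀crit.chromOn_eq]; omega)
  obtain ⟨P, hP, hPcard⟩ :=
    hsplit.exists_isJoinDecomposition hW₀crit hW₀ne (ncard_lt_ncard hW₀W)
  have hZ : (W \ W₀).Nonempty := ⟨u, hu, huW₀⟩
  have hZcard : (W \ W₀).ncard ≤ P.card := by
    have := ncard_sdiff_add_ncard_of_subset hW₀W.subset
    omega
  by_cases hjoin : ∃ X ∈ P, G.IsCompleteBetween X (W \ W₀)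
  · obtain ⟨X, hX, hXZ⟩ := hjoin
    exact hP.splitsAsJoin_of_isCompleteBetween hX hW₀W.subset hZ hXZ
  · obtain ⟨S, hSW, hle⟩ := hP.exists_ssubset_chromOn_le hW₀W.subset hZ hZcard
      fun X hX hXZ => hjoin ⟨X, hX, hXZ⟩
    have := hW.2 S hSW
    rw [hW.chromOn_eq] at hle
    omega

theorem IsCriticalOn.splitsAsJoin (hW : G.IsCriticalOn W r)
    (hcard : W.ncard + 2 ≤ 2 * r) : G.SplitsAsJoin W := by
  induction hn : W.ncard using Nat.strong_induction_on generalizing W r with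
  | _ n ih =>
  exact SmallCriticalSetsSplit.splitsAsJoin (hn ▸ fun W' r' hlt hW' hc => ih _ hlt hW' hc rfl)
    hW hcard

end Finite

end SimpleGraph

/-- Gallai: every `r`-critical graph on at most `2r - 2` vertices is the join of two smaller
critical graphs. -/
theorem gallai_small_critical (r : ℕ) (hr : 1 ≤ r) (V : Type) [Fintype V]
    (G : SimpleGraph V) (hG : IsCritical r G) (hcard : Fintype.card V ≤ 2 * r - 2) :
    ∃ (a b : ℕ), 1 ≤ a ∧ 1 ≤ b ∧ a + b = r ∧
      ∃ (α β : Type) (A : SimpleGraph α) (B : SimpleGraph β),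
        IsCritical a A ∧ IsCritical b B ∧ Nonempty (G ≃g graphJoin A B) := by
  have hcrit := SimpleGraph.isCritical_iff_isCriticalOn_univ.1 hG
  obtain ⟨T, -, hT, hTc, hjoin⟩ :=
    hcrit.splitsAsJoin (by rw [Set.ncard_univ, Nat.card_eq_fintype_card]; omega)
  rw [← Set.compl_eq_univ_sdiff] at hTc hjoin
  rw [← Set.union_compl_self T] at hcrit
  have hcritT := hcrit.of_isCompleteBetween hjoin
  have hcritTc := (Set.union_comm T _ ▸ hcrit).of_isCompleteBetween hjoin.symm
  refine ⟨G.chromOn T, G.chromOn Tᶜ, SimpleGraph.chromOn_pos_iff.2 hT,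
    SimpleGraph.chromOn_pos_iff.2 hTc, ?_, _, _, G.induce T, G.induce Tᶜ,
    SimpleGraph.isCritical_induce_iff.2 hcritT, SimpleGraph.isCritical_induce_iff.2 hcritTc,
    ⟨hjoin.graphJoinIso.symm⟩⟩
  rw [← hjoin.chromOn_union, hcrit.chromOn_eq]
end

section
/- Let F be a forest and let d be a positive integer. If a graph G has minimum degree at least d, then the number of (unlabeled) copies of F in G is at least the number of (unlabeled) copies of F in the complete graph K_{d+1}. Equivalently, the number of injective graph homomorphisms from F to G is at least ∏_{i=1}^{|F|} (d - i + 2). -/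
/-!
A finite forest `F` has a vertex `x` with at most one neighbour. Given a labelled copy of `F - x`
in `G`, the vertex `x` may be sent to any vertex outside its image that is adjacent to the image
of the neighbour of `x` (if any); minimum degree `d` leaves at least `d + 1 - (|F| - 1)` such
choices. By induction `G` contains at least `(d + 1) d ⋯ (d + 2 - |F|)` labelled copies of `F`,
which is exactly the number of labelled copies of `F` in `K_{d+1}`. Every unlabelled copy comes
from exactly `|Aut F|` labelled ones, so the unlabelled counts compare the same way.
-/

/-- The number of (unlabeled) copies of `F` in `G`: the number of subgraphs of `G`
isomorphic to `F`. -/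
noncomputable def copyCount {α V : Type*} (F : SimpleGraph α) (G : SimpleGraph V) : ℕ :=
  Nat.card {H : G.Subgraph // Nonempty (H.coe ≃g F)}

namespace SimpleGraph

variable {α V : Type*} {F : SimpleGraph α} {G : SimpleGraph V}

instance [Finite α] [Finite V] : Finite (Copy F G) := DFunLike.finite _

instance [Finite α] [Finite V] : Finite (F ≃g G) := DFunLike.finite _

theorem IsAcyclic.exists_neighborSet_subsingleton [Nonempty V] [Finite G.edgeSet]
    (hG : G.IsAcyclic) : ∃ x, (G.neighborSet x).Subsingleton := by
  obtain ⟨u, v, p, hp, hmax⟩ := Walk.exists_isPath_forall_isPath_length_le_length G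
  suffices ∀ w, G.Adj u w → w = p.snd from
    ⟨u, fun a ha b hb => (this a ha).trans (this b hb).symm⟩
  intro w huw
  refine hG.eq_snd_of_adj_start hp huw (by_contra fun hw => ?_)
  have := hmax _ _ (.cons huw.symm p) (hp.cons hw)
  simp at this

lemma ncard_neighborSet [Fintype V] [DecidableRel G.Adj] (v : V) :
    (G.neighborSet v).ncard = G.degree v := by
  rw [Set.ncard_eq_toFinset_card', ← card_neighborFinset_eq_degree]
  rfl

namespace Copy

variable {x : α}

def extensionSet (f : Copy (F.induce {x}ᶜ) G) : Set V :=
  {s | s ∉ Set.range f ∧ ∀ b (hb : b ∈ ({x}ᶜ : Set α)), F.Adj x b → G.Adj s (f ⟨b, hb⟩)}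

open Classical in
noncomputable def extend (f : Copy (F.induce {x}ᶜ) G) (s : f.extensionSet) : Copy F G := by
  refine ⟨⟨fun a => if h : a = x then (s : V) else f ⟨a, h⟩, fun {a b} hab => ?_⟩,
    fun a b hab => ?_⟩
  · split_ifs with ha hb hb
    · exact (F.ne_of_adj hab (ha.trans hb.symm)).elim
    · subst ha; exact s.2.2 b hb hab
    · subst hb; exact (s.2.2 a ha hab.symm).symm
    · exact f.toHom.map_adj hab
  · simp only [RelHom.coeFn_mk] at hab
    split_ifs at hab with ha hb hb
    · exact ha.trans hb.symm
    · exact (s.2.1 ⟨_, hab.symm⟩).elim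
    · exact (s.2.1 ⟨_, hab⟩).elim
    · exact congrArg Subtype.val (f.injective hab)

open Classical in
lemma extend_apply (f : Copy (F.induce {x}ᶜ) G) (s : f.extensionSet) (a : α) :
    f.extend s a = if h : a = x then (s : V) else f ⟨a, h⟩ := rfl

@[simp] lemma extend_apply_self (f : Copy (F.induce {x}ᶜ) G) (s : f.extensionSet) :
    f.extend s x = s := by
  simp [extend_apply]

@[simp] lemma extend_comp_induce (f : Copy (F.induce {x}ᶜ) G) (s : f.extensionSet) :
    (f.extend s).comp (Copy.induce F {x}ᶜ) = f := by
  ext ⟨b, hb⟩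
  simp [extend_apply, comp_apply, Copy.induce, show b ≠ x from hb]

lemma le_ncard_extensionSet [Finite α] [Fintype V] [DecidableRel G.Adj] {d : ℕ}
    (hdeg : ∀ v, d ≤ G.degree v) (hV : d < Fintype.card V) (hx : (F.neighborSet x).Subsingleton)
    (f : Copy (F.induce {x}ᶜ) G) :
    d + 1 - Nat.card ({x}ᶜ : Set α) ≤ f.extensionSet.ncard := by
  have hrange : (Set.range f).ncard = Nat.card ({x}ᶜ : Set α) :=
    Set.ncard_range_of_injective f.injective
  rcases hx.eq_empty_or_singleton with hx | ⟨w, hw⟩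
  · have hsub : (Set.range f)ᶜ ⊆ f.extensionSet := fun s hs =>
      ⟨hs, fun b _ hxb => (Set.eq_empty_iff_forall_notMem.mp hx b hxb).elim⟩
    have := Set.ncard_le_ncard hsub
    rw [Set.ncard_compl, hrange, Nat.card_eq_fintype_card] at this
    omega
  · have hxw : F.Adj x w := by rw [← mem_neighborSet, hw]; rfl
    let w' : ({x}ᶜ : Set α) := ⟨w, hxw.ne.symm⟩
    have hsub : G.neighborSet (f w') \ Set.range f ⊆ f.extensionSet := fun s ⟨hs, hsr⟩ =>
      ⟨hsr, fun b hb hxb => by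
        have hb : b ∈ F.neighborSet x := hxb
        rw [hw] at hb
        subst hb
        exact hs.symm⟩
    -- `f w'` is an image vertex but not its own neighbour, so the image blocks at most
    -- `|F - x| - 1` neighbours of `f w'`.
    have hcover : G.neighborSet (f w') ⊆
        (G.neighborSet (f w') \ Set.range f) ∪ (Set.range f \ {f w'}) := fun s hs => by
      by_cases hsr : s ∈ Set.range f
      · exact Or.inr ⟨hsr, fun h => G.ne_of_adj hs (h : s = f w').symm⟩
      · exact Or.inl ⟨hs, hsr⟩
    have hdeg' := (Set.ncard_le_ncard hcover).trans (Set.ncard_union_le _ _)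
    rw [ncard_neighborSet, Set.ncard_sdiff_singleton_of_mem (Set.mem_range_self w'),
      hrange] at hdeg'
    have := Set.ncard_le_ncard hsub
    have := hdeg (f w')
    have : 0 < Nat.card ({x}ᶜ : Set α) := have : Nonempty ({x}ᶜ : Set α) := ⟨w'⟩; Nat.card_pos
    omega

variable [Finite α] [Finite V]

lemma mul_card_copy_induce_le_card_copy (x : α) {k : ℕ}
    (hk : ∀ f : Copy (F.induce {x}ᶜ) G, k ≤ f.extensionSet.ncard) :
    k * Nat.card (Copy (F.induce {x}ᶜ) G) ≤ Nat.card (Copy F G) := by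
  have := Fintype.ofFinite (Copy (F.induce {x}ᶜ) G)
  have hinj : Function.Injective
      fun p : Σ f : Copy (F.induce {x}ᶜ) G, f.extensionSet => p.1.extend p.2 := by
    rintro ⟨f, s⟩ ⟨g, t⟩ h
    refine Sigma.subtype_ext ?_ ?_
    · simpa using congrArg (·.comp (Copy.induce F {x}ᶜ)) h
    · simpa using DFunLike.congr_fun h x
  calc k * Nat.card (Copy (F.induce {x}ᶜ) G)
      = ∑ _f : Copy (F.induce {x}ᶜ) G, k := by simp [mul_comm]
    _ ≤ ∑ f : Copy (F.induce {x}ᶜ) G, Nat.card f.extensionSet :=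
        Finset.sum_le_sum fun f _ => (hk f).trans_eq (Nat.card_coe_set_eq _).symm
    _ = Nat.card (Σ f : Copy (F.induce {x}ᶜ) G, f.extensionSet) := Nat.card_sigma.symm
    _ ≤ Nat.card (Copy F G) := Nat.card_le_card_of_injective _ hinj

end Copy

theorem IsAcyclic.descFactorial_le_card_copy [Finite α] [Fintype V] [DecidableRel G.Adj] {d : ℕ}
    (hF : F.IsAcyclic) (hdeg : ∀ v, d ≤ G.degree v) (hV : d < Fintype.card V) :
    (d + 1).descFactorial (Nat.card α) ≤ Nat.card (Copy F G) := by
  induction hn : Nat.card α generalizing α with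
  | zero =>
    have : IsEmpty α := Finite.card_eq_zero_iff.mp hn
    have : F ⊑ G := .of_isEmpty
    exact Nat.card_pos
  | succ n ih =>
    have : Nonempty α := Nat.card_pos_iff.mp (by omega) |>.1
    obtain ⟨x, hx⟩ := hF.exists_neighborSet_subsingleton
    have hcard : Nat.card ({x}ᶜ : Set α) = n := by
      rw [Nat.card_coe_set_eq, Set.ncard_compl, Set.ncard_singleton, hn, Nat.add_sub_cancel]
    calc (d + 1).descFactorial (n + 1) = (d + 1 - n) * (d + 1).descFactorial n :=
          Nat.descFactorial_succ _ _
      _ ≤ (d + 1 - n) * Nat.card (Copy (F.induce {x}ᶜ) G) := by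
          gcongr
          exact ih (hF.induce _) hcard
      _ ≤ Nat.card (Copy F G) := Copy.mul_card_copy_induce_le_card_copy x fun f =>
          hcard ▸ Copy.le_ncard_extensionSet hdeg hV hx f

namespace Copy

variable {H : SimpleGraph V}

noncomputable def toIsoSubgraph (f : Copy F H) : {K : H.Subgraph // Nonempty (K.coe ≃g F)} :=
  ⟨f.toSubgraph, ⟨f.isoToSubgraph.symm⟩⟩

lemma toSubgraph_coeCopy_comp {K : H.Subgraph} (e : F ≃g K.coe) :
    (K.coeCopy.comp e.toCopy).toSubgraph = K := by
  change Subgraph.map (K.hom.comp e.toHom) ⊤ = K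
  rw [Subgraph.map_comp]
  simp

lemma coe_cast_iso_apply {K K' : H.Subgraph} (h : K = K') (e : F ≃g K.coe) (a : α) :
    ((h ▸ e : F ≃g K'.coe) a : V) = e a := by
  subst h
  rfl

noncomputable def toIsoSubgraphFiberEquiv (K : {K : H.Subgraph // Nonempty (K.coe ≃g F)}) :
    {f : Copy F H // f.toIsoSubgraph = K} ≃ (F ≃g K.1.coe) where
  toFun f := (congrArg Subtype.val f.2 : f.1.toSubgraph = K.1) ▸ f.1.isoToSubgraph
  invFun e := ⟨K.1.coeCopy.comp e.toCopy, Subtype.ext (toSubgraph_coeCopy_comp e)⟩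
  left_inv _ := Subtype.ext <| Copy.ext fun a => coe_cast_iso_apply _ _ a
  right_inv _ := RelIso.ext fun a => Subtype.ext <| coe_cast_iso_apply _ _ a

variable [Finite α] [Finite V]

theorem card_eq_copyCount_mul_card_iso :
    Nat.card (Copy F H) = _root_.copyCount F H * Nat.card (F ≃g F) := by
  have := Fintype.ofFinite {K : H.Subgraph // Nonempty (K.coe ≃g F)}
  calc Nat.card (Copy F H)
      = Nat.card (Σ K, {f : Copy F H // f.toIsoSubgraph = K}) :=
        Nat.card_congr (Equiv.sigmaFiberEquiv _).symm
    _ = ∑ K : {K : H.Subgraph // Nonempty (K.coe ≃g F)}, Nat.card (F ≃g F) := by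
        rw [Nat.card_sigma]
        refine Finset.sum_congr rfl fun K _ => ?_
        obtain ⟨e⟩ := K.2
        rw [Nat.card_congr (toIsoSubgraphFiberEquiv K)]
        exact Nat.card_congr ⟨fun σ => σ.trans e, fun τ => τ.trans e.symm,
          fun σ => by ext; simp, fun τ => by ext; simp⟩
    _ = _root_.copyCount F H * Nat.card (F ≃g F) := by
        rw [Finset.sum_const, Finset.card_univ, smul_eq_mul, _root_.copyCount,
          ← Nat.card_eq_fintype_card]

end Copy

def injectiveHomEquivCopy : {f : F →g G // Function.Injective f} ≃ Copy F G where
  toFun f := f.1.toCopy f.2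
  invFun f := ⟨f.toHom, f.injective⟩

def Copy.topEquivEmbedding {W : Type*} : Copy F (⊤ : SimpleGraph W) ≃ (α ↪ W) where
  toFun f := f.toEmbedding
  invFun e := ⟨⟨e, fun hab => (top_adj _ _).mpr (e.injective.ne (F.ne_of_adj hab))⟩, e.injective⟩

end SimpleGraph

theorem Nat.prod_Icc_add_two_sub_eq_descFactorial (d n : ℕ) :
    ∏ i ∈ Finset.Icc 1 n, (d + 2 - i) = (d + 1).descFactorial n := by
  induction n with
  | zero => simp
  | succ n ih =>
    rw [Finset.prod_Icc_succ_top (by omega), ih, Nat.descFactorial_succ, mul_comm]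
    congr 1
    omega

theorem forest_copies_of_min_degree_general (α : Type) [Fintype α] (F : SimpleGraph α)
    (hF : F.IsAcyclic) (d : ℕ) (V : Type) [Fintype V] [Nonempty V]
    (G : SimpleGraph V) [DecidableRel G.Adj] (hdeg : ∀ v : V, d ≤ G.degree v) :
    copyCount F (⊤ : SimpleGraph (Fin (d + 1))) ≤ copyCount F G ∧
    ∏ i ∈ Finset.Icc 1 (Fintype.card α), (d + 2 - i) ≤
      Nat.card {f : F →g G // Function.Injective f} := by
  open SimpleGraph in
  obtain ⟨v⟩ := ‹Nonempty V›
  have hV : d < Fintype.card V := (hdeg v).trans_lt (G.degree_lt_card_verts v)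
  have hcopies : (d + 1).descFactorial (Fintype.card α) ≤ Nat.card (Copy F G) := by
    simpa only [Nat.card_eq_fintype_card] using hF.descFactorial_le_card_copy hdeg hV
  refine ⟨Nat.le_of_mul_le_mul_right ?_ (Nat.card_pos (α := F ≃g F)), ?_⟩
  · rwa [← Copy.card_eq_copyCount_mul_card_iso, ← Copy.card_eq_copyCount_mul_card_iso,
      Nat.card_congr Copy.topEquivEmbedding, Nat.card_eq_fintype_card,
      Fintype.card_embedding_eq, Fintype.card_fin]
  · rwa [Nat.prod_Icc_add_two_sub_eq_descFactorial, Nat.card_congr injectiveHomEquivCopy]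

/-- Let `F` be a forest and `d ≥ 1`. If `G` has minimum degree at least `d`, then the
number of (unlabeled) copies of `F` in `G` is at least the number of copies of `F` in
`K_{d+1}`; equivalently, the number of injective graph homomorphisms from `F` to `G` is at
least `∏_{i=1}^{|F|} (d - i + 2)`. -/
theorem forest_copies_of_min_degree (α : Type) [Fintype α] (F : SimpleGraph α)
    (hF : F.IsAcyclic) (d : ℕ) (hd : 1 ≤ d) (V : Type) [Fintype V] [Nonempty V]
    (G : SimpleGraph V) [DecidableRel G.Adj] (hdeg : ∀ v : V, d ≤ G.degree v) :
    copyCount F (⊤ : SimpleGraph (Fin (d + 1))) ≤ copyCount F G ∧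
    ∏ i ∈ Finset.Icc 1 (Fintype.card α), (d + 2 - i) ≤
      Nat.card {f : F →g G // Function.Injective f} :=
  forest_copies_of_min_degree_general α F hF d V G hdeg
end

section
/- For every integer t ≥ 2, setting b = binomial(t, 2), every graph G that is K_t-Ramsey contains at least m(b) copies of K_t, where m(b) is the minimum number of edges in a b-uniform hypergraph that admits no proper 2-coloring of its vertices (i.e., lacking property B). -/
/-- `m(b)`: the minimum number of edges in a `b`-uniform hypergraph without property B,
i.e. admitting no 2-coloring of its vertices in which no edge is monochromatic. -/
noncomputable def propertyBNumber (b : ℕ) : ℕ :=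
  sInf {N : ℕ | ∃ E : Finset (Finset ℕ), (∀ e ∈ E, e.card = b) ∧
    (∀ c : ℕ → Bool, ∃ e ∈ E, ∀ x ∈ e, ∀ y ∈ e, c x = c y) ∧ E.card = N}

/-!
The `t`-cliques of `G` form a `binomial(t, 2)`-uniform hypergraph on the pairs of vertices, each
clique contributing its set of pairs. A 2-colouring of the pairs is a 2-colouring of the edges
of `G`, so if `G` is `K_t`-Ramsey, this hypergraph lacks property B and has at least `m(b)` edges.
-/

open Finset

def LacksPropertyB {α : Type*} (E : Finset (Finset α)) : Prop :=
  ∀ c : α → Bool, ∃ e ∈ E, ∀ x ∈ e, ∀ y ∈ e, c x = c y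

theorem LacksPropertyB.map {α β : Type*} {E : Finset (Finset α)} (hE : LacksPropertyB E)
    (f : α ↪ β) : LacksPropertyB (E.map ⟨Finset.map f, Finset.map_injective f⟩) := by
  intro c
  obtain ⟨e, he, hmono⟩ := hE (c ∘ f)
  refine ⟨e.map f, mem_map_of_mem _ he, ?_⟩
  simp only [mem_map]
  rintro _ ⟨x, hx, rfl⟩ _ ⟨y, hy, rfl⟩
  exact hmono x hx y hy

theorem propertyBNumber_le_card {α : Type*} [Countable α] {b : ℕ} {E : Finset (Finset α)}
    (huniform : ∀ e ∈ E, #e = b) (hE : LacksPropertyB E) : propertyBNumber b ≤ #E := by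
  obtain ⟨f, hf⟩ := Countable.exists_injective_nat α
  let ι : α ↪ ℕ := ⟨f, hf⟩
  refine Nat.sInf_le ⟨E.map ⟨Finset.map ι, Finset.map_injective ι⟩, ?_, hE.map ι, card_map _⟩
  simp only [mem_map, Function.Embedding.coeFn_mk]
  rintro _ ⟨e, he, rfl⟩
  rw [card_map, huniform e he]

namespace SimpleGraph

variable {V : Type*} [Fintype V] [DecidableEq V] (G : SimpleGraph V) [DecidableRel G.Adj]

/-- Pairs of vertices are encoded as 2-element finsets; `Sym2.toFinset` relates them to `Sym2 V`. -/
def cliquePairHypergraph (t : ℕ) : Finset (Finset (Finset V)) :=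
  (G.cliqueFinset t).image (powersetCard 2)

variable {G}

theorem card_of_mem_cliquePairHypergraph {t : ℕ} {e : Finset (Finset V)}
    (he : e ∈ G.cliquePairHypergraph t) : #e = t.choose 2 := by
  obtain ⟨S, hS, rfl⟩ := mem_image.mp he
  rw [card_powersetCard, (mem_cliqueFinset_iff.mp hS).card_eq]

theorem card_cliquePairHypergraph_le (t : ℕ) :
    #(G.cliquePairHypergraph t) ≤ #(G.cliqueFinset t) :=
  card_image_le

theorem _root_.IsRamsey.lacksPropertyB_cliquePairHypergraph {t : ℕ} (hG : IsRamsey t G) :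
    LacksPropertyB (G.cliquePairHypergraph t) := by
  intro c
  obtain ⟨S, b, hcard, hS⟩ := hG fun z => c z.toFinset
  have hclique : G.IsNClique t S :=
    ⟨fun u hu v hv huv => (hS u hu v hv huv).1, hcard⟩
  have hmono : ∀ x ∈ powersetCard 2 S, c x = b := by
    intro x hx
    obtain ⟨hxS, hx2⟩ := mem_powersetCard.mp hx
    obtain ⟨u, v, huv, rfl⟩ := card_eq_two.mp hx2
    rw [← Sym2.toFinset_mk_eq]
    exact (hS u (hxS (by simp)) v (hxS (by simp)) huv).2
  refine ⟨powersetCard 2 S, mem_image_of_mem _ (mem_cliqueFinset_iff.mpr hclique), ?_⟩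
  intro x hx y hy
  rw [hmono x hx, hmono y hy]

end SimpleGraph

theorem ramsey_clique_count_lower_general (t : ℕ) (V : Type) [Fintype V]
    (G : SimpleGraph V) (hG : IsRamsey t G) :
    propertyBNumber (t.choose 2) ≤ Nat.card {S : Finset V // G.IsNClique t S} := by
  classical
  calc propertyBNumber (t.choose 2) ≤ #(G.cliquePairHypergraph t) :=
        propertyBNumber_le_card (fun _ => SimpleGraph.card_of_mem_cliquePairHypergraph)
          hG.lacksPropertyB_cliquePairHypergraph
    _ ≤ #(G.cliqueFinset t) := SimpleGraph.card_cliquePairHypergraph_le t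
    _ = Nat.card {S : Finset V // G.IsNClique t S} := by
        rw [Nat.card_eq_fintype_card, Fintype.card_subtype]
        rfl

/-- For `t ≥ 2` and `b = binomial(t,2)`, every `K_t`-Ramsey graph contains at least `m(b)`
copies of `K_t`. -/
theorem ramsey_clique_count_lower (t : ℕ) (ht : 2 ≤ t) (V : Type) [Fintype V]
    (G : SimpleGraph V) (hG : IsRamsey t G) :
    propertyBNumber (t.choose 2) ≤ Nat.card {S : Finset V // G.IsNClique t S} :=
  ramsey_clique_count_lower_general t V G hG
end
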